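/- Suppose the spectral measure μ on ℝ^d satisfies sup_{η∈ℝ^d} ∫_{ℝ^d} μ(dξ)/(1 + |ξ+η|²) < ∞. Then the fundamental solution G of the wave equation satisfies condition (A3): ∫_0^T sup_{η∈ℝ^d} ∫_{ℝ^d} |FG(s)(ξ+η)|² μ(dξ) ds < ∞, and also (A6): ∫_0^T sup_{η∈ℝ^d} |FG(s)(η)|² ds < ∞. -/

import Mathlib

/-! `|sin x| ≤ |x|` controls `waveFT` near `r = 0`, and `|sin x| ≤ 1` controls it at infinity;
together they give `waveFT s r ^ 2 ≤ C_T / (1 + r ^ 2)` for `|s| ≤ T`. Both integrability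
conditions then follow by bounding the integrand over `(0, T]` by a finite constant. -/

open MeasureTheory Set Real
open scoped ENNReal

/-- Fourier transform of the fundamental solution of the wave equation,
as a function of `t` and `r = |ξ|` (with value `t` at `r = 0`). -/
noncomputable def waveFT (t r : ℝ) : ℝ :=
  if r = 0 then t else Real.sin (2 * Real.pi * t * r) / (2 * Real.pi * r)

theorem waveFT_sq_le_sq (s r : ℝ) : waveFT s r ^ 2 ≤ s ^ 2 := by
  unfold waveFT
  split_ifs with hr
  · rfl
  · rw [div_pow, div_le_iff₀ (by positivity)]
    nlinarith [Real.sin_sq_le_sq (x := 2 * π * s * r)]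

theorem waveFT_sq_mul_sq_le (s r : ℝ) : waveFT s r ^ 2 * r ^ 2 ≤ 1 / (4 * π ^ 2) := by
  unfold waveFT
  split_ifs with hr
  · simp [hr, pi_pos.le]
  · have hπr : (2 * π * r) ^ 2 ≠ 0 := by positivity
    calc (Real.sin (2 * π * s * r) / (2 * π * r)) ^ 2 * r ^ 2
        = Real.sin (2 * π * s * r) ^ 2 / (4 * π ^ 2) := by field_simp; ring
      _ ≤ 1 / (4 * π ^ 2) := by gcongr; exact Real.sin_sq_le_one _

theorem waveFT_sq_le_sq_of_abs_le {T s : ℝ} (hs : |s| ≤ T) (r : ℝ) : waveFT s r ^ 2 ≤ T ^ 2 :=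
  (waveFT_sq_le_sq s r).trans (sq_le_sq' (abs_le.1 hs).1 (abs_le.1 hs).2)

theorem waveFT_sq_le_div {T s : ℝ} (hs : |s| ≤ T) (r : ℝ) :
    waveFT s r ^ 2 ≤ (T ^ 2 + 1 / (4 * π ^ 2)) / (1 + r ^ 2) := by
  rw [le_div_iff₀ (by positivity)]
  nlinarith [waveFT_sq_le_sq_of_abs_le hs r, waveFT_sq_mul_sq_le s r]

theorem setLIntegral_lt_top_of_le {α : Type*} [MeasurableSpace α] {μ : Measure α} {s : Set α}
    (hs : μ s ≠ ∞) {f : α → ℝ≥0∞} {c : ℝ≥0∞} (hc : c ≠ ∞) (hf : ∀ x ∈ s, f x ≤ c) :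
    ∫⁻ x in s, f x ∂μ < ∞ :=
  setLIntegral_lt_top_of_le_nnreal hs ⟨c.toNNReal, by simpa [ENNReal.coe_toNNReal hc] using hf⟩

theorem iSup_lintegral_le_mul_iSup_lintegral {ι α : Type*} [MeasurableSpace α] {μ : Measure α}
    {f g : ι → α → ℝ≥0∞} {c : ℝ≥0∞} (hc : c ≠ ∞) (hfg : ∀ i x, f i x ≤ c * g i x) :
    ⨆ i, ∫⁻ x, f i x ∂μ ≤ c * ⨆ i, ∫⁻ x, g i x ∂μ := by
  refine iSup_le fun i => ?_
  calc ∫⁻ x, f i x ∂μ ≤ ∫⁻ x, c * g i x ∂μ := lintegral_mono (hfg i)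
    _ = c * ∫⁻ x, g i x ∂μ := lintegral_const_mul' _ _ hc
    _ ≤ c * ⨆ i, ∫⁻ x, g i x ∂μ := by gcongr; exact le_iSup (fun i => ∫⁻ x, g i x ∂μ) i

theorem stmt_14_general {d : ℕ} (μ : Measure (EuclideanSpace ℝ (Fin d)))
    (T : ℝ)
    (hμ : (⨆ η : EuclideanSpace ℝ (Fin d),
        ∫⁻ ξ, ENNReal.ofReal (1 / (1 + ‖ξ + η‖ ^ 2)) ∂μ) < ⊤) :
    (∫⁻ s in Set.Ioc (0 : ℝ) T,
        ⨆ η : EuclideanSpace ℝ (Fin d),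
          ∫⁻ ξ, ENNReal.ofReal ((waveFT s ‖ξ + η‖) ^ 2) ∂μ) < ⊤ ∧
    (∫⁻ s in Set.Ioc (0 : ℝ) T,
        ⨆ η : EuclideanSpace ℝ (Fin d),
          ENNReal.ofReal ((waveFT s ‖η‖) ^ 2)) < ⊤ := by
  have habs : ∀ s ∈ Ioc (0 : ℝ) T, |s| ≤ T := fun s hs => (abs_of_pos hs.1).trans_le hs.2
  have hIoc : volume (Ioc (0 : ℝ) T) ≠ ∞ := measure_Ioc_lt_top.ne
  have hC : ENNReal.ofReal (T ^ 2 + 1 / (4 * π ^ 2)) ≠ ∞ := ENNReal.ofReal_ne_top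
  constructor
  · refine setLIntegral_lt_top_of_le hIoc (ENNReal.mul_ne_top hC hμ.ne)
      fun s hs => iSup_lintegral_le_mul_iSup_lintegral hC fun η ξ => ?_
    rw [← ENNReal.ofReal_mul (by positivity), mul_one_div]
    exact ENNReal.ofReal_le_ofReal (waveFT_sq_le_div (habs s hs) _)
  · refine setLIntegral_lt_top_of_le hIoc (ENNReal.ofReal_ne_top (r := T ^ 2))
      fun s hs => iSup_le fun η =>
        ENNReal.ofReal_le_ofReal (waveFT_sq_le_sq_of_abs_le (habs s hs) _)

theorem stmt_14 {d : ℕ} (μ : Measure (EuclideanSpace ℝ (Fin d)))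
    (T : ℝ) (hT : 0 < T)
    (hμ : (⨆ η : EuclideanSpace ℝ (Fin d),
        ∫⁻ ξ, ENNReal.ofReal (1 / (1 + ‖ξ + η‖ ^ 2)) ∂μ) < ⊤) :
    (∫⁻ s in Set.Ioc (0 : ℝ) T,
        ⨆ η : EuclideanSpace ℝ (Fin d),
          ∫⁻ ξ, ENNReal.ofReal ((waveFT s ‖ξ + η‖) ^ 2) ∂μ) < ⊤ ∧
    (∫⁻ s in Set.Ioc (0 : ℝ) T,
        ⨆ η : EuclideanSpace ℝ (Fin d),
          ENNReal.ofReal ((waveFT s ‖η‖) ^ 2)) < ⊤ :=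
  stmt_14_general μ T hμ
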